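/- arXiv:1609.08489 — 3 statements merged into one kernel-verified Lean document; each statement's English description precedes it below -/
import Mathlib

section
/- Pliss Lemma: Let a_1,...,a_n be real numbers all bounded above by b, and suppose that (1/n)·Σ_{i=1}^n a_i ≥ c for some c < b. Then for any c' < c there exist l indices 1 ≤ i_1 < i_2 < ... < i_l ≤ n such that for every k = 1,...,l and every j with 1 ≤ j ≤ i_k one has Σ_{i=j}^{i_k} a_i ≥ (i_k - j + 1)·c'. Moreover l/n ≥ (c - c')/(b - c'). -/
/-!
Put `S m = ∑_{i ≤ m} (a i - c')`. The indices `m` at which `S` reaches a weak record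
(`S j ≤ S m` for all `j < m`) are the required ones: a record at `m` says exactly that every
block of the sequence ending at `m` has average at least `c'`. Since `S` grows by at most
`b - c'` per step and a value that is not a record lies below an earlier value, induction gives
`S j ≤ #records · (b - c')` for all `j ≤ n`; at `j = n` the average hypothesis gives
`n (c - c') ≤ S n`.
-/

open Finset

def recordTimes {α : Type*} [LinearOrder α] (S : ℕ → α) (n : ℕ) : Finset ℕ :=
  (Icc 1 n).filter fun m => ∀ j < m, S j ≤ S m

section Records

variable {α : Type*} [LinearOrder α] (S : ℕ → α)

theorem recordTimes_subset (n : ℕ) : recordTimes S n ⊆ Icc 1 n :=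
  filter_subset _ _

theorem recordTimes_mono {m n : ℕ} (h : m ≤ n) : recordTimes S m ⊆ recordTimes S n :=
  filter_subset_filter _ (Icc_subset_Icc le_rfl h)

theorem recordTimes_succ_of_isRecord {n : ℕ} (h : ∀ j < n + 1, S j ≤ S (n + 1)) :
    recordTimes S (n + 1) = insert (n + 1) (recordTimes S n) := by
  rw [recordTimes, ← insert_Icc_right_eq_Icc_add_one (by omega), filter_insert, if_pos h]
  rfl

theorem card_recordTimes_succ_of_isRecord {n : ℕ} (h : ∀ j < n + 1, S j ≤ S (n + 1)) :
    #(recordTimes S (n + 1)) = #(recordTimes S n) + 1 := by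
  rw [recordTimes_succ_of_isRecord S h,
    card_insert_of_notMem fun hn => by simpa using recordTimes_subset S n hn]

end Records

theorem le_add_card_recordTimes_nsmul {α : Type*} [AddCommMonoid α] [LinearOrder α]
    [IsOrderedAddMonoid α] (S : ℕ → α) {d : α} (hd : 0 ≤ d) {n : ℕ}
    (hstep : ∀ m < n, S (m + 1) ≤ S m + d) :
    ∀ j ≤ n, S j ≤ S 0 + #(recordTimes S n) • d := by
  induction n with
  | zero =>
    intro j hj
    rw [Nat.le_zero.mp hj]
    exact le_add_of_nonneg_right (nsmul_nonneg hd _)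
  | succ n ih =>
    have ih := ih fun m hm => hstep m (by omega)
    have hmono : S 0 + #(recordTimes S n) • d ≤ S 0 + #(recordTimes S (n + 1)) • d :=
      add_le_add_right (nsmul_le_nsmul_left hd (card_le_card (recordTimes_mono S n.le_succ))) _
    suffices hlast : S (n + 1) ≤ S 0 + #(recordTimes S (n + 1)) • d by
      intro j hj
      rcases Nat.lt_or_eq_of_le hj with hj | rfl
      · exact (ih j (by omega)).trans hmono
      · exact hlast
    by_cases hrec : ∀ j < n + 1, S j ≤ S (n + 1)
    · rw [card_recordTimes_succ_of_isRecord S hrec, succ_nsmul, ← add_assoc]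
      exact (hstep n n.lt_succ_self).trans (add_le_add_left (ih n le_rfl) d)
    · obtain ⟨j, hj, hlt⟩ : ∃ j < n + 1, S (n + 1) < S j := by simpa using hrec
      exact hlt.le.trans ((ih j (by omega)).trans hmono)

theorem sum_Ioc_nonneg_of_mem_recordTimes {α : Type*} [AddCommGroup α] [LinearOrder α]
    [IsOrderedAddMonoid α] (f : ℕ → α) {n k : ℕ}
    (hk : k ∈ recordTimes (fun m => ∑ i ∈ Ioc 0 m, f i) n) {j : ℕ} (hj : j < k) :
    0 ≤ ∑ i ∈ Ioc j k, f i := by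
  have hrec : ∑ i ∈ Ioc 0 j, f i ≤ ∑ i ∈ Ioc 0 k, f i := (mem_filter.mp hk).2 j hj
  rw [← sum_Ioc_consecutive f (Nat.zero_le j) hj.le] at hrec
  simpa using hrec

/-- Pliss Lemma. -/
theorem pliss_lemma (n : ℕ) (hn : 0 < n) (a : ℕ → ℝ) (b c c' : ℝ)
    (hb : ∀ i ∈ Finset.Icc 1 n, a i ≤ b) (hcb : c < b) (hc' : c' < c)
    (havg : (n : ℝ) * c ≤ ∑ i ∈ Finset.Icc 1 n, a i) :
    ∃ s : Finset ℕ, s ⊆ Finset.Icc 1 n ∧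
      (∀ ik ∈ s, ∀ j, 1 ≤ j → j ≤ ik →
        ((ik : ℝ) - (j : ℝ) + 1) * c' ≤ ∑ i ∈ Finset.Icc j ik, a i) ∧
      (c - c') / (b - c') ≤ (s.card : ℝ) / (n : ℝ) := by
  set S : ℕ → ℝ := fun m => ∑ i ∈ Ioc 0 m, (a i - c')
  have hstep : ∀ m < n, S (m + 1) ≤ S m + (b - c') := fun m hm => by
    simp only [S, sum_Ioc_succ_top (Nat.zero_le m)]
    linarith [hb (m + 1) (mem_Icc.mpr ⟨by omega, hm⟩)]
  refine ⟨recordTimes S n, recordTimes_subset S n, fun k hk j hj hjk => ?_, ?_⟩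
  · obtain ⟨j, rfl⟩ := Nat.exists_eq_add_of_le' hj
    have hblock := sum_Ioc_nonneg_of_mem_recordTimes (fun i => a i - c') hk (by omega : j < k)
    rw [sum_sub_distrib, sum_const, Nat.card_Ioc, nsmul_eq_mul, Nat.cast_sub (by omega)] at hblock
    rw [Icc_add_one_left_eq_Ioc]
    push_cast
    linarith
  · have hmass : (n : ℝ) * (c - c') ≤ S n := by
      rw [show Icc 1 n = Ioc 0 n from Icc_add_one_left_eq_Ioc 0 n] at havg
      simp only [S, sum_sub_distrib, sum_const, Nat.card_Ioc, Nat.sub_zero, nsmul_eq_mul]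
      linarith
    have hrecords := le_add_card_recordTimes_nsmul S (by linarith : 0 ≤ b - c') hstep n le_rfl
    simp only [S, Ioc_self, sum_empty, zero_add, nsmul_eq_mul] at hrecords
    rw [div_le_div_iff₀ (by linarith) (by exact_mod_cast hn)]
    linarith
end

section
/- Composition of good approximations: if γ_2 is an (ε_1, κ_1) good approximation of γ_1 and γ_3 is an (ε_2, κ_2) good approximation of γ_2, and moreover the period of γ_1 is at most the period of γ_2, then γ_3 is an (ε_1 + ε_2, κ_1·κ_2) good approximation of γ_1. -/
/-- A periodic orbit of `f`, given by a point together with its (minimal) period. -/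
structure PeriodicOrbitData {X : Type*} [MetricSpace X] (f : X → X) where
  pt : X
  per : ℕ
  per_pos : 0 < per
  periodic : f^[per] pt = pt
  minimal : ∀ k, 0 < k → k < per → f^[k] pt ≠ pt

/-- The orbit of a periodic point, as a finite set. -/
noncomputable def orbitFinset {X : Type*} [MetricSpace X] (f : X → X)
    (γ : PeriodicOrbitData f) : Finset X :=
  haveI := Classical.decEq X
  (Finset.range γ.per).image (fun i => f^[i] γ.pt)

/-- `γ'` is an `(ε, κ)` good approximation of `γ`. -/
def IsGoodApprox {X : Type*} [MetricSpace X] (f : X → X) (ε κ : ℝ)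
    (γ' γ : PeriodicOrbitData f) : Prop :=
  ∃ (s : Finset X) (P : X → X),
    s ⊆ orbitFinset f γ' ∧
    (∀ y ∈ s, P y ∈ orbitFinset f γ) ∧
    (∀ y ∈ s, ∀ i < γ.per, dist (f^[i] y) (f^[i] (P y)) < ε) ∧
    κ ≤ (s.card : ℝ) / (γ'.per : ℝ) ∧
    ∃ m : ℕ, ∀ x ∈ orbitFinset f γ, {y ∈ (s : Set X) | P y = x}.ncard = m

lemma orbitFinset_card {X : Type*} [MetricSpace X] {f : X → X} (hf : Function.Injective f)
    (γ : PeriodicOrbitData f) : (orbitFinset f γ).card = γ.per := by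
  classical
  have key : ∀ i j, i < j → j < γ.per → f^[i] γ.pt ≠ f^[j] γ.pt := by
    intro i j hij hj h
    have : f^[i] (f^[j - i] γ.pt) = f^[i] γ.pt := by
      rw [← Function.iterate_add_apply]
      rw [show i + (j - i) = j by omega]
      exact h.symm
    have := (hf.iterate i) this
    exact γ.minimal (j - i) (by omega) (by omega) this
  rw [orbitFinset, Finset.card_image_of_injOn, Finset.card_range]
  intro i hi j hj hij
  simp only [Finset.coe_range, Set.mem_Iio] at hi hj
  rcases lt_trichotomy i j with h | h | h
  · exact absurd hij (key i j h hj)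
  · exact h
  · exact absurd hij.symm (key j i h hi)

/-- Composition of good approximations. -/
theorem goodApprox_comp {X : Type*} [MetricSpace X] [CompactSpace X] (f : X ≃ₜ X)
    (ε₁ ε₂ κ₁ κ₂ : ℝ) (hε₁ : 0 < ε₁) (hε₂ : 0 < ε₂)
    (hκ₁ : κ₁ ∈ Set.Ioo (0 : ℝ) 1) (hκ₂ : κ₂ ∈ Set.Ioo (0 : ℝ) 1)
    (γ₁ γ₂ γ₃ : PeriodicOrbitData (f : X → X))
    (h12 : IsGoodApprox (f : X → X) ε₁ κ₁ γ₂ γ₁)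
    (h23 : IsGoodApprox (f : X → X) ε₂ κ₂ γ₃ γ₂)
    (hper : γ₁.per ≤ γ₂.per) :
    IsGoodApprox (f : X → X) (ε₁ + ε₂) (κ₁ * κ₂) γ₃ γ₁ := by
  classical
  obtain ⟨s₁, P₁, hs₁sub, hP₁mem, hP₁dist, hs₁card, m₁, hm₁⟩ := h12
  obtain ⟨s₂, P₂, hs₂sub, hP₂mem, hP₂dist, hs₂card, m₂, hm₂⟩ := h23
  have ncard_eq : ∀ (s : Finset X) (P : X → X) (x : X),
      {y ∈ (s : Set X) | P y = x}.ncard = (s.filter fun y => P y = x).card := by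
    intro s P x
    rw [show {y ∈ (s : Set X) | P y = x} = ↑(s.filter fun y => P y = x) by
      ext y; simp [Finset.mem_filter], Set.ncard_coe_finset]
  have fib₁ : ∀ x ∈ orbitFinset (f : X → X) γ₁,
      (s₁.filter fun y => P₁ y = x).card = m₁ := by
    intro x hx; rw [← ncard_eq]; exact hm₁ x hx
  have fib₂ : ∀ x ∈ orbitFinset (f : X → X) γ₂,
      (s₂.filter fun y => P₂ y = x).card = m₂ := by
    intro x hx; rw [← ncard_eq]; exact hm₂ x hx
  set s : Finset X := s₂.filter (fun y => P₂ y ∈ s₁) with hs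
  -- card of s
  have hscard : s.card = s₁.card * m₂ := by
    rw [Finset.card_eq_sum_card_fiberwise (f := P₂) (s := s) (t := s₁)
      (fun y hy => (Finset.mem_filter.mp hy).2)]
    rw [Finset.sum_congr rfl (fun x hx => ?_), Finset.sum_const, smul_eq_mul]
    rw [show s.filter (fun y => P₂ y = x) = s₂.filter (fun y => P₂ y = x) by
      ext y; simp only [hs, Finset.mem_filter, and_assoc]
      constructor
      · rintro ⟨h1, _, h3⟩; exact ⟨h1, h3⟩
      · rintro ⟨h1, h3⟩; exact ⟨h1, h3 ▸ hx, h3⟩]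
    exact fib₂ x (hs₁sub hx)
  -- card of s₂
  have hs₂card' : s₂.card = γ₂.per * m₂ := by
    rw [Finset.card_eq_sum_card_fiberwise (f := P₂) (t := orbitFinset (f : X → X) γ₂) hP₂mem]
    rw [Finset.sum_congr rfl (fun x hx => fib₂ x hx), Finset.sum_const, smul_eq_mul,
      orbitFinset_card f.injective]
  refine ⟨s, P₁ ∘ P₂, ?_, ?_, ?_, ?_, m₁ * m₂, ?_⟩
  · exact fun y hy => hs₂sub (Finset.mem_filter.mp hy).1
  · intro y hy
    exact hP₁mem _ (Finset.mem_filter.mp hy).2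
  · intro y hy i hi
    obtain ⟨hy₂, hy₁⟩ := Finset.mem_filter.mp hy
    calc dist ((f : X → X)^[i] y) ((f : X → X)^[i] ((P₁ ∘ P₂) y))
        ≤ dist ((f : X → X)^[i] y) ((f : X → X)^[i] (P₂ y)) +
          dist ((f : X → X)^[i] (P₂ y)) ((f : X → X)^[i] (P₁ (P₂ y))) := dist_triangle _ _ _
      _ < ε₂ + ε₁ := add_lt_add (hP₂dist y hy₂ i (lt_of_lt_of_le hi hper))
          (hP₁dist (P₂ y) hy₁ i hi)
      _ = ε₁ + ε₂ := add_comm _ _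
  · -- κ₁ * κ₂ ≤ s.card / γ₃.per
    have hp2 : (0 : ℝ) < γ₂.per := by exact_mod_cast γ₂.per_pos
    have hp3 : (0 : ℝ) < γ₃.per := by exact_mod_cast γ₃.per_pos
    have h1 : κ₁ * κ₂ ≤ ((s₁.card : ℝ) / γ₂.per) * ((s₂.card : ℝ) / γ₃.per) :=
      mul_le_mul hs₁card hs₂card hκ₂.1.le (by positivity)
    refine h1.trans (le_of_eq ?_)
    rw [hscard, hs₂card']
    push_cast
    field_simp
  · intro x hx
    rw [ncard_eq]
    rw [Finset.card_eq_sum_card_fiberwise (f := P₂) (t := s₁.filter fun z => P₁ z = x)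
      (fun y hy => ?_)]
    · rw [Finset.sum_congr rfl (fun z hz => ?_), Finset.sum_const, smul_eq_mul,
        fib₁ x hx]
      obtain ⟨hz₁, hzx⟩ := Finset.mem_filter.mp hz
      rw [show (s.filter fun y => (P₁ ∘ P₂) y = x).filter (fun y => P₂ y = z)
          = s₂.filter (fun y => P₂ y = z) by
        ext y
        simp only [hs, Finset.mem_filter, Function.comp_apply, and_assoc]
        constructor
        · rintro ⟨h1, _, _, h4⟩; exact ⟨h1, h4⟩
        · rintro ⟨h1, h4⟩; exact ⟨h1, h4 ▸ hz₁, h4 ▸ hzx, h4⟩]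
      exact fib₂ z (hs₁sub hz₁)
    · obtain ⟨hy', hyx⟩ := Finset.mem_filter.mp hy
      obtain ⟨hy₂, hy₁⟩ := Finset.mem_filter.mp hy'
      exact Finset.mem_filter.mpr ⟨hy₁, hyx⟩
end

section
/- Suppose γ' is an (ε,κ) good approximation of γ, and let g : X → ℝ be a continuous function such that |g(x) − g(y)| ≤ η·‖g‖_{C^0} whenever d(x,y) < ε. Then |∫ g dδ_{γ'} − ∫ g dδ_γ| ≤ (η + 2(1−κ))·‖g‖_{C^0}, where δ_γ denotes the uniform atomic probability measure on the periodic orbit γ. -/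
/-!
Split the orbit `γ'` into the approximating part `s` and its complement. On `s` the projection
`P` moves each point by less than `ε`, so `g` and `g ∘ P` differ by at most `η‖g‖` there; and
since all fibres of `P` have the same size, `g ∘ P` has on `s` the same average as `g` on `γ`.
The complement carries mass at most `1 - κ`, and it costs `(1 - κ)‖g‖` twice: once as the
missing part of the sum over `γ'`, once in renormalising the average over `s` by `#s / π(γ')`
instead of `1`.
-/

open Finset

namespace Finset

variable {α β : Type*}

lemma abs_sum_le_card_mul {s : Finset α} {u : α → ℝ} {C : ℝ} (hu : ∀ i ∈ s, |u i| ≤ C) :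
    |∑ i ∈ s, u i| ≤ #s * C := by
  simpa using (abs_sum_le_sum_abs u s).trans (sum_le_card_nsmul s _ C hu)

lemma abs_sum_div_card_le_mul {s : Finset α} {u : α → ℝ} {C : ℝ} (hu : ∀ i ∈ s, |u i| ≤ C)
    (t : Finset β) : |(∑ i ∈ s, u i) / #t| ≤ #s / #t * C := by
  rw [abs_div, Nat.abs_cast, div_mul_eq_mul_div]
  exact div_le_div_of_nonneg_right (abs_sum_le_card_mul hu) (Nat.cast_nonneg _)

lemma abs_sum_div_card_le {s : Finset α} {u : α → ℝ} {C : ℝ} (hC : 0 ≤ C)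
    (hu : ∀ i ∈ s, |u i| ≤ C) : |(∑ i ∈ s, u i) / #s| ≤ C :=
  (abs_sum_div_card_le_mul hu s).trans (mul_le_of_le_one_left hC (div_self_le_one _))

variable [DecidableEq β] {s : Finset α} {t : Finset β} {P : α → β} {m : ℕ}

lemma card_eq_mul_of_card_fiber_eq (hP : ∀ y ∈ s, P y ∈ t)
    (hfib : ∀ x ∈ t, #{y ∈ s | P y = x} = m) : #s = m * #t := by
  rw [card_eq_sum_card_fiberwise hP, sum_congr rfl hfib, sum_const, smul_eq_mul, mul_comm]

lemma sum_comp_eq_card_mul_sum (hP : ∀ y ∈ s, P y ∈ t)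
    (hfib : ∀ x ∈ t, #{y ∈ s | P y = x} = m) (h : β → ℝ) :
    ∑ y ∈ s, h (P y) = m * ∑ x ∈ t, h x := by
  rw [← sum_fiberwise_of_maps_to hP, mul_sum]
  refine sum_congr rfl fun x hx => ?_
  rw [sum_congr rfl fun y hy => by rw [(mem_filter.1 hy).2], sum_const, hfib x hx, nsmul_eq_mul]

lemma sum_comp_eq_card_mul_average (hP : ∀ y ∈ s, P y ∈ t)
    (hfib : ∀ x ∈ t, #{y ∈ s | P y = x} = m) (h : β → ℝ) :
    ∑ y ∈ s, h (P y) = #s * ((∑ x ∈ t, h x) / #t) := by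
  rw [sum_comp_eq_card_mul_sum hP hfib, card_eq_mul_of_card_fiber_eq hP hfib]
  rcases t.eq_empty_or_nonempty with rfl | ht
  · simp
  · have := ht.card_pos
    push_cast
    field_simp

theorem abs_average_sub_average_le [DecidableEq α] {S : Finset α} {g : α → ℝ} {h : β → ℝ}
    {C G : ℝ} (hsS : s ⊆ S) (hP : ∀ y ∈ s, P y ∈ t)
    (hfib : ∀ x ∈ t, #{y ∈ s | P y = x} = m)
    (hC : 0 ≤ C) (hclose : ∀ y ∈ s, |g y - h (P y)| ≤ C)
    (hG : 0 ≤ G) (hg : ∀ y ∈ S, |g y| ≤ G) (hh : ∀ x ∈ t, |h x| ≤ G) :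
    |(∑ y ∈ S, g y) / #S - (∑ x ∈ t, h x) / #t| ≤ C + 2 * (1 - #s / #S) * G := by
  set A := (∑ x ∈ t, h x) / #t
  set r : ℝ := #s / #S
  have hsplit : (∑ y ∈ S, g y) / #S - A
      = (∑ y ∈ S \ s, g y) / #S + (∑ y ∈ s, (g y - h (P y))) / #S + (r - 1) * A := by
    rw [← sum_sdiff hsS, sum_sub_distrib, sum_comp_eq_card_mul_average hP hfib]
    ring
  have hr : r ≤ 1 := div_le_one_of_le₀ (by exact_mod_cast card_le_card hsS) (Nat.cast_nonneg _)
  have hrest : (#(S \ s) : ℝ) / #S ≤ 1 - r := by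
    rw [card_sdiff_of_subset hsS, Nat.cast_sub (card_le_card hsS), sub_div]
    exact sub_le_sub_right (div_self_le_one _) r
  have hrest_bound := (abs_sum_div_card_le_mul (fun y hy => hg y (sdiff_subset hy)) S).trans
    (mul_le_mul_of_nonneg_right hrest hG)
  have hclose_bound := (abs_sum_div_card_le_mul hclose S).trans (mul_le_of_le_one_left hC hr)
  have hrenorm_bound : |(r - 1) * A| ≤ (1 - r) * G := by
    rw [abs_mul, abs_of_nonpos (sub_nonpos.2 hr), neg_sub]
    exact mul_le_mul_of_nonneg_left (abs_sum_div_card_le hG hh) (sub_nonneg.2 hr)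
  rw [hsplit]
  refine (abs_add_three _ _ _).trans ?_
  linarith

end Finset

namespace PeriodicOrbitData

variable {X : Type*} [MetricSpace X] {f : X → X} (γ : PeriodicOrbitData f)

lemma minimalPeriod_pt : Function.minimalPeriod f γ.pt = γ.per := by
  have hper : Function.IsPeriodicPt f γ.per γ.pt := γ.periodic
  refine (hper.minimalPeriod_le γ.per_pos).antisymm (not_lt.1 fun hlt => ?_)
  exact γ.minimal _ (hper.minimalPeriod_pos γ.per_pos) hlt Function.iterate_minimalPeriod

lemma injOn_iterate : Set.InjOn (fun i => f^[i] γ.pt) (range γ.per) := by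
  simpa [← γ.minimalPeriod_pt] using Function.iterate_injOn_Iio_minimalPeriod

end PeriodicOrbitData

lemma card_orbitFinset {X : Type*} [MetricSpace X] {f : X → X} (γ : PeriodicOrbitData f) :
    #(orbitFinset f γ) = γ.per := by
  classical
  rw [orbitFinset]
  exact (card_image_of_injOn γ.injOn_iterate).trans (card_range _)

lemma sum_orbitFinset {X M : Type*} [MetricSpace X] [AddCommMonoid M] {f : X → X}
    (γ : PeriodicOrbitData f) (u : X → M) :
    ∑ y ∈ orbitFinset f γ, u y = ∑ i ∈ range γ.per, u (f^[i] γ.pt) := by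
  classical
  rw [orbitFinset]
  exact sum_image γ.injOn_iterate

theorem goodApprox_integral_estimate_general {X : Type*} [MetricSpace X] [CompactSpace X]
    (f : X ≃ₜ X) (ε κ η : ℝ) (hη : 0 < η)
    (γ' γ : PeriodicOrbitData (f : X → X))
    (h : IsGoodApprox (f : X → X) ε κ γ' γ)
    (g : C(X, ℝ))
    (hg : ∀ x y : X, dist x y < ε → |g x - g y| ≤ η * ‖g‖) :
    |(1 / (γ'.per : ℝ)) * ∑ i ∈ Finset.range γ'.per, g ((f : X → X)^[i] γ'.pt)
      - (1 / (γ.per : ℝ)) * ∑ i ∈ Finset.range γ.per, g ((f : X → X)^[i] γ.pt)|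
      ≤ (η + 2 * (1 - κ)) * ‖g‖ := by
  classical
  obtain ⟨s, P, hsS, hP, hclose, hκs, m, hfib⟩ := h
  have hbound (x : X) : |g x| ≤ ‖g‖ := by simpa using g.norm_coe_le_norm x
  have key := abs_average_sub_average_le (g := g) (h := g) hsS hP
    (fun x hx => by simpa [← Set.ncard_coe_finset, coe_filter] using hfib x hx)
    (mul_nonneg hη.le (norm_nonneg g))
    (fun y hy => hg _ _ (by simpa using hclose y hy 0 γ.per_pos))
    (norm_nonneg g) (fun y _ => hbound y) (fun x _ => hbound x)
  rw [card_orbitFinset, card_orbitFinset, sum_orbitFinset, sum_orbitFinset] at key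
  simp only [one_div_mul_eq_div]
  refine key.trans ?_
  linarith [mul_le_mul_of_nonneg_right hκs (norm_nonneg g)]

/-- Integral estimate against the uniform measures on two periodic orbits, one of which
is an `(ε,κ)` good approximation of the other. -/
theorem goodApprox_integral_estimate {X : Type*} [MetricSpace X] [CompactSpace X]
    (f : X ≃ₜ X) (ε κ η : ℝ) (hε : 0 < ε) (hκ : κ ∈ Set.Ioo (0 : ℝ) 1) (hη : 0 < η)
    (γ' γ : PeriodicOrbitData (f : X → X))
    (h : IsGoodApprox (f : X → X) ε κ γ' γ)
    (g : C(X, ℝ))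
    (hg : ∀ x y : X, dist x y < ε → |g x - g y| ≤ η * ‖g‖) :
    |(1 / (γ'.per : ℝ)) * ∑ i ∈ Finset.range γ'.per, g ((f : X → X)^[i] γ'.pt)
      - (1 / (γ.per : ℝ)) * ∑ i ∈ Finset.range γ.per, g ((f : X → X)^[i] γ.pt)|
      ≤ (η + 2 * (1 - κ)) * ‖g‖ :=
  goodApprox_integral_estimate_general f ε κ η hη γ' γ h g hg
end
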